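/- Reduced chain penalty: For p > 0, the chain of length k ≥ 3 in which every consecutive edge (i, i+1) has weight p and the edge (1, k) has weight −p (all other edges 0) has maximum partition score exactly (k−2)·p; that is, every partition C satisfies Q(C) ≤ (k−2)·p and some partition attains (k−2)·p. Equivalently, its penalty Q̄ − max_C Q(C) equals p. -/
import Mathlib


open Finset

/-- Score of a partition `C` of a weighted complete graph `w`:
sum of weights of edges within clusters, `Q_w(C) = ∑_{i<j, C i = C j} w i j`. -/
noncomputable def cpScore {n : ℕ} (w : Fin n → Fin n → ℝ) (C : Fin n → ℕ) : ℝ :=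
  ∑ i : Fin n, ∑ j : Fin n, if i < j ∧ C i = C j then w i j else 0

/-- Trivial upper bound `Q̄(w) = ∑_{i<j, 0 < w i j} w i j`. -/
noncomputable def trivUB {n : ℕ} (w : Fin n → Fin n → ℝ) : ℝ :=
  ∑ i : Fin n, ∑ j : Fin n, if i < j ∧ 0 < w i j then w i j else 0

/-- `ws` is a subnetwork of `w`: symmetric, `|ws i j| ≤ |w i j|` and weights share signs. -/
def IsSubnetwork {n : ℕ} (w ws : Fin n → Fin n → ℝ) : Prop :=
  (∀ i j, ws i j = ws j i) ∧
  ∀ i j : Fin n, i < j → |ws i j| ≤ |w i j| ∧ 0 ≤ ws i j * w i j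

/-- Weights of a chain on `k` vertices `0, …, k-1`: consecutive edges `(i, i+1)`
have positive weight `a i`, the edge `(0, k-1)` has weight `-b`, all other edges `0`. -/
noncomputable def chainW (k : ℕ) (a : ℕ → ℝ) (b : ℝ) : Fin k → Fin k → ℝ := fun i j =>
  if j.val = i.val + 1 then a i.val
  else if i.val = j.val + 1 then a j.val
  else if i.val = 0 ∧ j.val = k - 1 then -b
  else if i.val = k - 1 ∧ j.val = 0 then -b
  else 0

-- pointwise analysis of the score summand
lemma chain_summand (k : ℕ) (hk : 3 ≤ k) (p : ℝ) (C : Fin k → ℕ) (c : ℕ → ℕ)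
    (hc : ∀ i : Fin k, c i.val = C i) (i j : Fin k) :
    (if i < j ∧ C i = C j then chainW k (fun _ => p) p i j else 0)
      = (if (j:ℕ) = (i:ℕ)+1 then (if c i = c ((i:ℕ)+1) then p else 0) else 0)
      + (if (j:ℕ) = k-1 then (if (i:ℕ) = 0 ∧ c 0 = c (k-1) then -p else 0) else 0) := by
  have hik := i.isLt
  have hjk := j.isLt
  rw [← hc i, ← hc j]
  simp only [Fin.lt_def]
  rcases eq_or_ne (j:ℕ) ((i:ℕ)+1) with h1 | h1
  · have hlt : (i:ℕ) < (j:ℕ) := by omega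
    rcases eq_or_ne ((i:ℕ)+1) (k-1) with h3 | h3
    · have hi0 : (i:ℕ) ≠ 0 := by omega
      have hik1 : (i:ℕ) < k - 1 := by omega
      simp [chainW, h1, h3, hlt, hi0, hik1]
    · simp [chainW, h1, h3, hlt]
  · rcases eq_or_ne (j:ℕ) (k-1) with h2 | h2
    · rcases eq_or_ne (i:ℕ) 0 with h3 | h3
      · have hlt : (i:ℕ) < (j:ℕ) := by omega
        have h4 : (i:ℕ) ≠ (j:ℕ) + 1 := by omega
        have hne : k ≠ 2 := by omega
        have h1k : 1 < k := by omega
        simp [chainW, h1, h2, h3, h4, hlt, hne, h1k]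
      · have h4 : (i:ℕ) ≠ (j:ℕ) + 1 := by omega
        have h6 : ¬((i:ℕ) = k-1 ∧ (j:ℕ) = 0) := by omega
        have h1' : k ≠ (i:ℕ) + 2 := by omega
        have h8 : (i:ℕ) ≠ k - 1 + 1 := by omega
        have h9 : k - 1 ≠ 0 := by omega
        simp [chainW, h1, h2, h3, h4, h6, h1', h8, h9]
    · -- j ≠ i+1, j ≠ k-1
      have h4 : ∀ (h : (i:ℕ) < (j:ℕ)), (i:ℕ) ≠ (j:ℕ)+1 := by omega
      simp only [if_neg h1, if_neg h2, add_zero]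
      split_ifs with h
      · obtain ⟨hij, -⟩ := h
        have h5 : ¬((i:ℕ) = 0 ∧ (j:ℕ) = k-1) := by tauto
        have h6 : ¬((i:ℕ) = k-1 ∧ (j:ℕ) = 0) := by omega
        simp [chainW, h1, h4 hij, h5, h6]
      · rfl

lemma sum_range_ite_ne (n i₀ : ℕ) (h : i₀ < n) (p : ℝ) :
    ∑ i ∈ Finset.range n, (if i = i₀ then (0:ℝ) else p) = n * p - p := by
  have h1 : ∀ i ∈ Finset.range n, (if i = i₀ then (0:ℝ) else p)
      = p - (if i = i₀ then p else 0) := by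
    intro i _; split_ifs <;> ring
  rw [Finset.sum_congr rfl h1, Finset.sum_sub_distrib, Finset.sum_const, Finset.card_range,
    Finset.sum_ite_eq' (Finset.range n) i₀ (fun _ => p), if_pos (Finset.mem_range.mpr h)]
  ring

lemma chain_score (k : ℕ) (hk : 3 ≤ k) (p : ℝ) (C : Fin k → ℕ) (c : ℕ → ℕ)
    (hc : ∀ i : Fin k, c i.val = C i) :
    cpScore (chainW k (fun _ => p) p) C =
      (∑ i ∈ Finset.range (k-1), if c i = c (i+1) then p else 0)
        + (if c 0 = c (k-1) then -p else 0) := by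
  unfold cpScore
  calc ∑ i : Fin k, ∑ j : Fin k, (if i < j ∧ C i = C j then chainW k (fun _ => p) p i j else 0)
      = ∑ i : Fin k, ((∑ j : Fin k, (if (j:ℕ) = (i:ℕ)+1 then (if c i = c ((i:ℕ)+1) then p else 0) else 0))
        + ∑ j : Fin k, (if (j:ℕ) = k-1 then (if (i:ℕ) = 0 ∧ c 0 = c (k-1) then -p else 0) else 0)) := by
        refine Finset.sum_congr rfl fun i _ => ?_
        rw [← Finset.sum_add_distrib]
        exact Finset.sum_congr rfl fun j _ => chain_summand k hk p C c hc i j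
    _ = ∑ i : Fin k, ((if (i:ℕ)+1 < k then (if c i = c ((i:ℕ)+1) then p else 0) else 0)
        + (if (i:ℕ) = 0 ∧ c 0 = c (k-1) then -p else 0)) := by
        refine Finset.sum_congr rfl fun i _ => ?_
        congr 1
        · rw [Fin.sum_univ_eq_sum_range (fun j => if j = (i:ℕ)+1 then (if c i = c ((i:ℕ)+1) then p else 0) else 0) k,
            Finset.sum_ite_eq' (Finset.range k) ((i:ℕ)+1)]
          simp [Finset.mem_range]
        · rw [Fin.sum_univ_eq_sum_range (fun j => if j = k-1 then (if (i:ℕ) = 0 ∧ c 0 = c (k-1) then -p else 0) else 0) k,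
            Finset.sum_ite_eq' (Finset.range k) (k-1)]
          have : k - 1 ∈ Finset.range k := Finset.mem_range.mpr (by omega)
          simp [this]
    _ = (∑ i ∈ Finset.range (k-1), if c i = c (i+1) then p else 0)
        + (if c 0 = c (k-1) then -p else 0) := by
        rw [Fin.sum_univ_eq_sum_range (fun i => (if i+1 < k then (if c i = c (i+1) then p else 0) else 0)
          + (if i = 0 ∧ c 0 = c (k-1) then -p else 0)) k, Finset.sum_add_distrib]
        congr 1
        · rw [← Finset.sum_subset (Finset.range_subset_range.mpr (by omega : k - 1 ≤ k))]
          · refine Finset.sum_congr rfl fun i hi => ?_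
            have hik : i + 1 < k := by have := Finset.mem_range.mp hi; omega
            rw [if_pos hik]
          · intro x hx hnx
            have : ¬(x + 1 < k) := by
              simp only [Finset.mem_range] at hx hnx; omega
            rw [if_neg this]
        · have h1 : ∀ i ∈ Finset.range k, (if i = 0 ∧ c 0 = c (k-1) then -p else 0)
              = (if i = 0 then (if c 0 = c (k-1) then -p else 0) else 0) := by
            intro i _; split_ifs <;> tauto
          rw [Finset.sum_congr rfl h1, Finset.sum_ite_eq' (Finset.range k) 0]
          simp [Finset.mem_range.mpr (by omega : 0 < k)]
lemma chain_trivUB (k : ℕ) (hk : 3 ≤ k) (p : ℝ) (hp : 0 < p) :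
    trivUB (chainW k (fun _ => p) p) = ((k:ℝ) - 1) * p := by
  have hcast : ((k-1 : ℕ) : ℝ) = (k:ℝ) - 1 := by
    rw [Nat.cast_sub (by omega : 1 ≤ k)]; norm_num
  unfold trivUB
  have key : ∀ i j : Fin k,
      (if i < j ∧ 0 < chainW k (fun _ => p) p i j then chainW k (fun _ => p) p i j else 0)
        = (if (j:ℕ) = (i:ℕ)+1 then p else 0) := by
    intro i j
    have hik := i.isLt
    have hjk := j.isLt
    rcases eq_or_ne (j:ℕ) ((i:ℕ)+1) with h1 | h1
    · have hlt : i < j := by rw [Fin.lt_def]; omega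
      simp [chainW, h1, hlt, hp]
    · rw [if_neg h1]
      by_cases hij : i < j
      · have hij' : (i:ℕ) < (j:ℕ) := Fin.lt_def.mp hij
        have h4 : (i:ℕ) ≠ (j:ℕ)+1 := by omega
        have h6 : ¬((i:ℕ) = k-1 ∧ (j:ℕ) = 0) := by omega
        by_cases h5 : (i:ℕ) = 0 ∧ (j:ℕ) = k-1
        · have hw : chainW k (fun _ => p) p i j = -p := by
            have hk2 : k ≠ 2 := by omega
            have hk1 : k - 1 ≠ 0 + 1 := by omega
            simp [chainW, h1, h4, h5, h6, hk2, hk1]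
          rw [hw, if_neg (by push_neg; intro _; linarith)]
        · have hw : chainW k (fun _ => p) p i j = 0 := by
            simp [chainW, h1, h4, h5, h6]
          simp [hw]
      · simp [hij]
  simp_rw [key]
  have h2 : ∀ i : Fin k, (∑ j : Fin k, if (j:ℕ) = (i:ℕ)+1 then p else 0)
      = (if (i:ℕ)+1 < k then p else 0) := by
    intro i
    rw [Fin.sum_univ_eq_sum_range (fun j => if j = (i:ℕ)+1 then p else 0) k,
      Finset.sum_ite_eq' (Finset.range k) ((i:ℕ)+1) (fun _ => p)]
    simp [Finset.mem_range]
  simp_rw [h2]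
  rw [Fin.sum_univ_eq_sum_range (fun i => if i+1 < k then p else 0) k,
    ← Finset.sum_subset (Finset.range_subset_range.mpr (by omega : k-1 ≤ k))]
  · rw [Finset.sum_congr rfl (fun i hi => if_pos (by have := Finset.mem_range.mp hi; omega)),
      Finset.sum_const, Finset.card_range, nsmul_eq_mul, hcast]
  · intro x hx hnx
    have : ¬(x+1 < k) := by simp only [Finset.mem_range] at hx hnx; omega
    rw [if_neg this]


/-- **Reduced chain penalty.** For `p > 0`, the chain of length `k ≥ 3` whose
consecutive edges all have weight `p` and whose edge `(0, k-1)` has weight `-p`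
has maximum partition score exactly `(k-2)·p`; equivalently, its penalty
`Q̄ - max Q` equals `p`. -/
theorem reduced_chain_penalty (k : ℕ) (hk : 3 ≤ k) (p : ℝ) (hp : 0 < p) :
    IsGreatest {q : ℝ | ∃ C : Fin k → ℕ, q = cpScore (chainW k (fun _ => p) p) C}
      (((k : ℝ) - 2) * p) ∧
    trivUB (chainW k (fun _ => p) p) - ((k : ℝ) - 2) * p = p := by
  have hk0 : 0 < k := by omega
  have hcast : ((k-1 : ℕ) : ℝ) = (k:ℝ) - 1 := by
    rw [Nat.cast_sub (by omega : 1 ≤ k)]; norm_num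
  refine ⟨⟨?_, ?_⟩, ?_⟩
  · -- membership: the two-cluster partition {0} ∪ {1,…,k-1}
    refine ⟨fun i => if (i:ℕ) = 0 then 0 else 1, ?_⟩
    set c : ℕ → ℕ := fun n => if n % k = 0 then 0 else 1 with hcdef
    have hc : ∀ i : Fin k, c i.val = (fun i : Fin k => if (i:ℕ) = 0 then 0 else 1) i := by
      intro i; simp [hcdef, Nat.mod_eq_of_lt i.isLt]
    rw [chain_score k hk p _ c hc]
    have hcv : ∀ n, n < k → c n = if n = 0 then 0 else 1 := by
      intro n hn; simp [hcdef, Nat.mod_eq_of_lt hn]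
    have hS : ∑ i ∈ Finset.range (k-1), (if c i = c (i+1) then p else 0)
        = ∑ i ∈ Finset.range (k-1), (if i = 0 then (0:ℝ) else p) := by
      refine Finset.sum_congr rfl fun i hi => ?_
      have hik : i < k - 1 := Finset.mem_range.mp hi
      rw [hcv i (by omega), hcv (i+1) (by omega)]
      rcases eq_or_ne i 0 with h | h
      · subst h; simp
      · simp [h]
    have hT : ¬ (c 0 = c (k-1)) := by
      rw [hcv 0 (by omega), hcv (k-1) (by omega)]
      simp [show k - 1 ≠ 0 by omega]
    rw [hS, if_neg hT, sum_range_ite_ne (k-1) 0 (by omega) p, hcast]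
    ring
  · -- upper bound
    rintro q ⟨C, rfl⟩
    set c : ℕ → ℕ := fun n => C ⟨n % k, Nat.mod_lt n hk0⟩ with hcdef
    have hc : ∀ i : Fin k, c i.val = C i := by
      intro i
      exact congrArg C (Fin.ext (Nat.mod_eq_of_lt i.isLt))
    rw [chain_score k hk p C c hc]
    by_cases hall : ∀ i < k - 1, c i = c (i+1)
    · have hS : ∑ i ∈ Finset.range (k-1), (if c i = c (i+1) then p else 0)
          = ∑ _i ∈ Finset.range (k-1), p :=
        Finset.sum_congr rfl fun i hi => if_pos (hall i (Finset.mem_range.mp hi))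
      have h0 : c 0 = c (k-1) := by
        have key : ∀ j, j ≤ k - 1 → c j = c 0 := by
          intro j
          induction j with
          | zero => intro _; rfl
          | succ n ih => intro h; rw [← hall n (by omega)]; exact ih (by omega)
        exact (key (k-1) le_rfl).symm
      rw [hS, if_pos h0, Finset.sum_const, Finset.card_range, nsmul_eq_mul, hcast]
      exact le_of_eq (by ring)
    · push_neg at hall
      obtain ⟨i₀, hi₀, hne⟩ := hall
      have hS : ∑ i ∈ Finset.range (k-1), (if c i = c (i+1) then p else 0)
          ≤ ∑ i ∈ Finset.range (k-1), (if i = i₀ then (0:ℝ) else p) := by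
        refine Finset.sum_le_sum fun i hi => ?_
        rcases eq_or_ne i i₀ with h | h
        · subst h; rw [if_neg hne, if_pos rfl]
        · rw [if_neg h]; split_ifs; exacts [le_rfl, hp.le]
      have hT : (if c 0 = c (k-1) then -p else 0) ≤ 0 := by
        split_ifs
        · linarith
        · exact le_rfl
      refine le_trans (add_le_add hS hT) ?_
      rw [sum_range_ite_ne (k-1) i₀ hi₀ p, hcast]
      exact le_of_eq (by ring)
  · rw [chain_trivUB k hk p hp]; ring
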